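/- arXiv:math/0209234 — 3 statements merged into one kernel-verified Lean document; each statement's English description precedes it below -/
import Mathlib

section
/- If every finitely generated subgroup of a group G given by a presentation ⟨A ∥ R⟩ is finitely presentable, then the presentation ⟨A ∥ R⟩ is weakly finite. -/
/-!
Let `S` be a finite set of words and `e : F(S) → F(A)` the inclusion of the words. The subgroup
of `G` generated by the images of `S` is finitely presented, so by Tietze's argument the kernel
of `F(S) → G` is the normal closure of finitely many elements; their `e`-images lie in the normal
closure of finitely many relators `R'`. Let `A₀` contain all letters of `S` and of `R'`, and let
`ρ : F(A) → F(A₀)` delete the letters outside `A₀`. Since `ρ` fixes `A₀`-words and carries the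
normal closure of `R'` into that of `R₀ = ρ(R')` (whatever letters the conjugators use), every
relation among the words of `S` in `G` already holds in `⟨A₀ ∥ R₀⟩`, which is injectivity.
-/

open Subgroup

/-- The natural quotient map `F(A) → ⟨A ∥ R⟩` of a presentation. -/
def presMk {α : Type} (R : Set (FreeGroup α)) :
    FreeGroup α →* FreeGroup α ⧸ Subgroup.normalClosure R :=
  QuotientGroup.mk' (Subgroup.normalClosure R)

/-- A presentation `⟨A ∥ R⟩` is weakly finite if for every finite set `S` of words in
`A^{±1}` there are a finite subalphabet `A₀ ⊆ A` and a finite set `R₀` of relators from `R`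
written in `A₀^{±1}`, such that every word of `S` is an `A₀`-word and the natural
homomorphism `⟨A₀ ∥ R₀⟩ → ⟨A ∥ R⟩` restricts to an isomorphism (i.e. is injective) on the
subgroup generated by the images of the words of `S`. -/
def IsWeaklyFinite {α : Type} (R : Set (FreeGroup α)) : Prop :=
  ∀ S : Finset (FreeGroup α),
    ∃ (A₀ : Finset α) (R₀ S₀ : Finset (FreeGroup {a : α // a ∈ A₀})),
      (FreeGroup.map (Subtype.val) '' (R₀ : Set (FreeGroup {a : α // a ∈ A₀})) ⊆ R) ∧
      (FreeGroup.map (Subtype.val) '' (S₀ : Set (FreeGroup {a : α // a ∈ A₀}))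
         = (S : Set (FreeGroup α))) ∧
      ∃ h : (FreeGroup {a : α // a ∈ A₀} ⧸
              Subgroup.normalClosure (R₀ : Set (FreeGroup {a : α // a ∈ A₀}))) →*
            (FreeGroup α ⧸ Subgroup.normalClosure R),
        (∀ w : FreeGroup {a : α // a ∈ A₀},
           h (presMk (R₀ : Set (FreeGroup {a : α // a ∈ A₀})) w)
             = presMk R (FreeGroup.map Subtype.val w)) ∧
        Set.InjOn h
          (closure (presMk (R₀ : Set (FreeGroup {a : α // a ∈ A₀})) ''
            (S₀ : Set (FreeGroup {a : α // a ∈ A₀}))) : Set _)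

/-- A group is finitely presentable if it is isomorphic to a group given by a finite
presentation. -/
def FinitelyPresentable (H : Type) [Group H] : Prop :=
  ∃ (n : ℕ) (rels : Set (FreeGroup (Fin n))), rels.Finite ∧
    Nonempty (H ≃* FreeGroup (Fin n) ⧸ Subgroup.normalClosure rels)

namespace Subgroup

variable {G : Type*} [Group G]

theorem exists_finite_subset_of_mem_normalClosure {R : Set G} {x : G}
    (hx : x ∈ normalClosure R) : ∃ R' ⊆ R, R'.Finite ∧ x ∈ normalClosure R' := by
  let N : Subgroup G :=
    { carrier := {x | ∃ R' ⊆ R, R'.Finite ∧ x ∈ normalClosure R'}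
      one_mem' := ⟨∅, Set.empty_subset R, Set.finite_empty, one_mem _⟩
      mul_mem' := by
        rintro x y ⟨R₁, h₁, hf₁, hx⟩ ⟨R₂, h₂, hf₂, hy⟩
        exact ⟨R₁ ∪ R₂, Set.union_subset h₁ h₂, hf₁.union hf₂,
          mul_mem (normalClosure_mono Set.subset_union_left hx)
            (normalClosure_mono Set.subset_union_right hy)⟩
      inv_mem' := by
        rintro x ⟨R', h, hf, hx⟩
        exact ⟨R', h, hf, inv_mem hx⟩ }
  have : N.Normal := ⟨by
    rintro x ⟨R', h, hf, hx⟩ g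
    exact ⟨R', h, hf, normalClosure_normal.conj_mem x hx g⟩⟩
  refine normalClosure_le_normal (N := N) (fun r hr => ?_) hx
  exact ⟨{r}, Set.singleton_subset_iff.2 hr, Set.finite_singleton r,
    subset_normalClosure (Set.mem_singleton r)⟩

theorem exists_finite_subset_of_subset_normalClosure {R X : Set G} (hX : X.Finite)
    (h : X ⊆ normalClosure R) : ∃ R' ⊆ R, R'.Finite ∧ X ⊆ normalClosure R' := by
  choose! F hFR hFfin hxF using fun x (hx : x ∈ X) =>
    exists_finite_subset_of_mem_normalClosure (h hx)
  exact ⟨⋃ x ∈ X, F x, Set.iUnion₂_subset hFR, hX.biUnion hFfin,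
    fun x hx => normalClosure_mono (Set.subset_biUnion_of_mem hx) (hxF x hx)⟩

end Subgroup

theorem FinitelyPresentable.isFinitelyPresented {H : Type} [Group H] (hH : FinitelyPresentable H) :
    Group.IsFinitelyPresented H := by
  obtain ⟨n, rels, hrels, ⟨θ⟩⟩ := hH
  have := hrels.to_subtype
  exact .equiv (G := PresentedGroup rels) θ.symm

theorem MonoidHom.injOn_range_of_ker_comp_le {G H K : Type*} [Group G] [Group H] [Group K]
    {ψ : G →* H} {φ : H →* K} (h : (φ.comp ψ).ker ≤ ψ.ker) : Set.InjOn φ ψ.range := by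
  rintro _ ⟨a, rfl⟩ _ ⟨b, rfl⟩ hab
  have hker : a * b⁻¹ ∈ (φ.comp ψ).ker := by simp [hab]
  simpa [mul_inv_eq_one] using h hker

namespace FreeGroup

variable {ι G H : Type*} [Group G] [Group H]

theorem exists_comp_eq_of_surjective {φ : G →* H} (hφ : Function.Surjective φ)
    (ψ : FreeGroup ι →* H) : ∃ f : FreeGroup ι →* G, φ.comp f = ψ :=
  ⟨lift fun i => Function.surjInv hφ (ψ (of i)),
    ext_hom _ _ fun i => by simp [Function.surjInv_eq]⟩

/-- Tietze's argument: with `ψ ∘ g = φ` and `φ ∘ f = ψ` for a finite presentation `φ` of `H`,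
the kernel of `ψ` is normally generated by the `g`-images of the relators together with the
finitely many elements `i⁻¹ g (f i)`. -/
theorem ker_isFinitelyNormallyGenerated_of_surjective [Finite ι] [Group.IsFinitelyPresented H]
    {ψ : FreeGroup ι →* H} (hψ : Function.Surjective ψ) : ψ.ker.IsFinitelyNormallyGenerated := by
  obtain ⟨n, φ, hφ, rels, hrels, hker⟩ := Group.IsFinitelyPresented.out (G := H)
  obtain ⟨f, hf⟩ := exists_comp_eq_of_surjective hφ ψ
  obtain ⟨g, hg⟩ := exists_comp_eq_of_surjective hψ φ
  set T := g '' rels ∪ Set.range fun i => (of i)⁻¹ * g (f (of i))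
  refine ⟨T, (hrels.image g).union (Set.finite_range _), le_antisymm ?_ ?_⟩
  · refine normalClosure_le_normal ?_
    rintro _ (⟨r, hr, rfl⟩ | ⟨i, rfl⟩)
    · rw [SetLike.mem_coe, MonoidHom.mem_ker, ← MonoidHom.comp_apply, hg, ← MonoidHom.mem_ker,
        ← hker]
      exact subset_normalClosure hr
    · rw [SetLike.mem_coe, MonoidHom.mem_ker, _root_.map_mul, _root_.map_inv,
        ← MonoidHom.comp_apply ψ g, hg, ← MonoidHom.comp_apply φ f, hf, inv_mul_cancel]
  · set q := QuotientGroup.mk' (normalClosure T)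
    have hq : (q.comp g).comp f = q := ext_hom _ _ fun i => by
      have hi : (of i)⁻¹ * g (f (of i)) ∈ normalClosure T :=
        subset_normalClosure (Or.inr ⟨i, rfl⟩)
      simpa [q, eq_comm, QuotientGroup.eq] using hi
    intro x hx
    have hfx : f x ∈ normalClosure rels := by
      rwa [hker, MonoidHom.mem_ker, ← MonoidHom.comp_apply, hf]
    have hgfx : g (f x) ∈ normalClosure T :=
      normalClosure_mono Set.subset_union_left (map_normalClosure_le rels g ⟨f x, hfx, rfl⟩)
    rw [← QuotientGroup.ker_mk' (normalClosure T), MonoidHom.mem_ker]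
    change q x = 1
    rw [← hq]
    exact (QuotientGroup.eq_one_iff _).2 hgfx

end FreeGroup


namespace FreeGroup

variable {α : Type*}

theorem exists_finset_mem_range_map_subtype_val (w : FreeGroup α) :
    ∃ A₀ : Finset α, w ∈ (map (Subtype.val : {a // a ∈ A₀} → α)).range := by
  classical
  simp only [range_map, Subtype.range_coe_subtype, Finset.setOfPred_mem]
  induction w using FreeGroup.induction_on with
  | C1 => exact ⟨∅, one_mem _⟩
  | of a => exact ⟨{a}, subset_closure ⟨a, by simp, rfl⟩⟩
  | inv_of a ih => exact ih.imp fun _ => inv_mem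
  | mul x y hx hy =>
    obtain ⟨A, hA⟩ := hx
    obtain ⟨B, hB⟩ := hy
    refine ⟨A ∪ B, mul_mem ?_ ?_⟩
    · exact closure_mono (Set.image_mono (by simp)) hA
    · exact closure_mono (Set.image_mono (by simp)) hB

theorem exists_finset_subset_range_map_subtype_val {W : Set (FreeGroup α)} (hW : W.Finite) :
    ∃ A₀ : Finset α, W ⊆ (map (Subtype.val : {a // a ∈ A₀} → α)).range := by
  classical
  choose A hA using exists_finset_mem_range_map_subtype_val (α := α)
  refine ⟨hW.toFinset.biUnion A, fun w hw => ?_⟩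
  simp only [range_map, Subtype.range_coe_subtype, Finset.setOfPred_mem] at hA ⊢
  exact closure_mono (Set.image_mono (Finset.coe_subset.2
    (Finset.subset_biUnion_of_mem A (hW.mem_toFinset.2 hw)))) (hA w)

section retract

variable [DecidableEq α]

def retractFinset (A₀ : Finset α) : FreeGroup α →* FreeGroup {a // a ∈ A₀} :=
  lift fun a => if h : a ∈ A₀ then of ⟨a, h⟩ else 1

theorem retractFinset_map_subtype_val (A₀ : Finset α) (x : FreeGroup {a // a ∈ A₀}) :
    retractFinset A₀ (map Subtype.val x) = x :=
  DFunLike.congr_fun (ext_hom ((retractFinset A₀).comp (map Subtype.val)) (.id _)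
    fun a => by simp [retractFinset]) x

theorem map_subtype_val_retractFinset {A₀ : Finset α} {x : FreeGroup α}
    (hx : x ∈ (map (Subtype.val : {a // a ∈ A₀} → α)).range) :
    map Subtype.val (retractFinset A₀ x) = x := by
  obtain ⟨y, rfl⟩ := hx
  rw [retractFinset_map_subtype_val]

theorem image_map_subtype_val_image_retractFinset {A₀ : Finset α} {W : Set (FreeGroup α)}
    (hW : W ⊆ (map (Subtype.val : {a // a ∈ A₀} → α)).range) :
    map Subtype.val '' (retractFinset A₀ '' W) = W := by
  rw [Set.image_image]
  exact Set.image_congr (fun x hx => map_subtype_val_retractFinset (hW hx)) |>.trans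
    (Set.image_id W)

end retract

end FreeGroup

open FreeGroup

theorem exists_finite_subset_ker_le_comap_normalClosure {ι α : Type} [Finite ι]
    {R : Set (FreeGroup α)} (e : FreeGroup ι →* FreeGroup α)
    (hfp : Group.IsFinitelyPresented ((presMk R).comp e).range) :
    ∃ R' ⊆ R, R'.Finite ∧ ((presMk R).comp e).ker ≤ (normalClosure R').comap e := by
  obtain ⟨T, hT, hker⟩ :=
    ker_isFinitelyNormallyGenerated_of_surjective ((presMk R).comp e).rangeRestrict_surjective
  rw [MonoidHom.ker_rangeRestrict] at hker
  have heT : e '' T ⊆ normalClosure R := by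
    rintro _ ⟨t, ht, rfl⟩
    exact (QuotientGroup.eq_one_iff _).1 (hker ▸ subset_normalClosure ht : t ∈ _)
  obtain ⟨R', hR'R, hR', heR'⟩ := exists_finite_subset_of_subset_normalClosure (hT.image e) heT
  refine ⟨R', hR'R, hR', hker ▸ normalClosure_le_normal ?_⟩
  rintro t ht
  exact heR' ⟨t, ht, rfl⟩

theorem injOn_closure_presMk_image_retractFinset {α : Type} [DecidableEq α]
    {R R' S : Set (FreeGroup α)} {A₀ : Finset α} {R₀ : Set (FreeGroup {a // a ∈ A₀})}
    (hS : S ⊆ (map (Subtype.val : {a // a ∈ A₀} → α)).range)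
    (hker : ((presMk R).comp (lift ((↑) : S → FreeGroup α))).ker ≤
      (normalClosure R').comap (lift (↑)))
    (hR₀ : retractFinset A₀ '' R' ⊆ R₀)
    (hR₀R : normalClosure R₀ ≤ (normalClosure R).comap (map Subtype.val)) :
    Set.InjOn (QuotientGroup.map _ _ _ hR₀R)
      (Subgroup.closure (presMk R₀ '' (retractFinset A₀ '' S))) := by
  set ψ := ((presMk R₀).comp (retractFinset A₀)).comp (lift ((↑) : S → FreeGroup α))
  have hψ : Subgroup.closure (presMk R₀ '' (retractFinset A₀ '' S)) = ψ.range := by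
    rw [← MonoidHom.map_range, ← closure_eq_range, MonoidHom.map_closure, Set.image_image]
    rfl
  have hcomp : (QuotientGroup.map _ _ _ hR₀R).comp ψ = (presMk R).comp (lift (↑)) :=
    ext_hom _ _ fun s => by
      simp only [ψ, MonoidHom.comp_apply, presMk, QuotientGroup.mk'_apply, QuotientGroup.map_mk,
        lift_apply_of, map_subtype_val_retractFinset (hS s.2)]
  rw [hψ]
  refine MonoidHom.injOn_range_of_ker_comp_le (hcomp ▸ hker.trans ?_)
  rw [← MonoidHom.comap_ker, ← MonoidHom.comap_ker, presMk, QuotientGroup.ker_mk']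
  exact comap_mono ((comap_normalClosure_image_ge R' _).trans (comap_mono (normalClosure_mono hR₀)))

/-- If every finitely generated subgroup of `G = ⟨A ∥ R⟩` is finitely presentable, then the
presentation `⟨A ∥ R⟩` is weakly finite. -/
theorem weaklyFinite_of_locallyFinitelyPresented {α : Type} (R : Set (FreeGroup α))
    (h : ∀ H : Subgroup (FreeGroup α ⧸ Subgroup.normalClosure R), H.FG → FinitelyPresentable H) :
    IsWeaklyFinite R := by
  classical
  intro S
  let e : FreeGroup (S : Set (FreeGroup α)) →* FreeGroup α := lift (↑)
  have hfg : ((presMk R).comp e).range.FG := by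
    rw [← MonoidHom.map_range, ← closure_eq_range, MonoidHom.map_closure]
    exact ⟨S.image (presMk R), by simp⟩
  obtain ⟨R', hR'R, hR', hker⟩ :=
    exists_finite_subset_ker_le_comap_normalClosure e (h _ hfg).isFinitelyPresented
  obtain ⟨A₀, hA₀⟩ := exists_finset_subset_range_map_subtype_val (S.finite_toSet.union hR')
  set ρ := retractFinset A₀
  set R₀ := (hR'.image ρ).toFinset
  have hR₀R : map Subtype.val '' (R₀ : Set (FreeGroup {a // a ∈ A₀})) ⊆ R := by
    rwa [Set.Finite.coe_toFinset,
      image_map_subtype_val_image_retractFinset (Set.subset_union_right.trans hA₀)]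
  have hR₀ : normalClosure (R₀ : Set (FreeGroup {a // a ∈ A₀})) ≤
      (normalClosure R).comap (map Subtype.val) :=
    (comap_normalClosure_image_ge _ _).trans (comap_mono (normalClosure_mono hR₀R))
  refine ⟨A₀, R₀, S.image ρ, hR₀R, ?_, QuotientGroup.map _ _ _ hR₀, fun w => rfl, ?_⟩
  · rw [Finset.coe_image,
      image_map_subtype_val_image_retractFinset (Set.subset_union_left.trans hA₀)]
  rw [Finset.coe_image]
  exact injOn_closure_presMk_image_retractFinset (Set.subset_union_left.trans hA₀) hker
    (hR'.image ρ).coe_toFinset.superset hR₀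
end

section
/- Let A be a finite alphabet and ⟨A ∥ R⟩ a presentation of a group G with R possibly infinite. Then the presentation is weakly finite if and only if there exists a finite subset R₀ ⊆ R whose normal closure in the free group F(A) equals the normal closure of R. -/
open Subgroup

/-- For a presentation with a finite generating alphabet `A`, the presentation `⟨A ∥ R⟩`
is weakly finite if and only if there is a finite subset `R₀ ⊆ R` with the same normal
closure in the free group `F(A)` as `R`. -/
theorem weaklyFinite_iff_finite_normalClosure {α : Type} [Finite α]
    (R : Set (FreeGroup α)) :
    IsWeaklyFinite R ↔
      ∃ R₀ ⊆ R, R₀.Finite ∧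
        Subgroup.normalClosure R₀ = Subgroup.normalClosure R := by
  classical
  have _i : Fintype α := Fintype.ofFinite α
  constructor
  · intro hwf
    obtain ⟨A₀, R₀, S₀, hR₀, hS₀, h, hcomm, hinj⟩ := hwf (Finset.univ.image FreeGroup.of)
    -- Every letter lies in A₀.
    have hmem : ∀ a : α, a ∈ A₀ := by
      intro a
      by_contra ha
      have hofa : (FreeGroup.of a : FreeGroup α) ∈
          FreeGroup.map (Subtype.val) '' (S₀ : Set (FreeGroup {a : α // a ∈ A₀})) := by
        rw [hS₀]; simp
      obtain ⟨s, _, hs⟩ := hofa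
      set χ : FreeGroup α →* Multiplicative ℤ :=
        FreeGroup.lift (fun b => if b = a then Multiplicative.ofAdd 1 else 1) with hχ
      have h2 : χ.comp (FreeGroup.map (Subtype.val : {a : α // a ∈ A₀} → α)) = 1 := by
        apply FreeGroup.ext_hom
        intro b
        have hb : (b : α) ≠ a := fun hba => ha (hba ▸ b.2)
        simp [hχ, hb]
      have h3 : χ (FreeGroup.of a) = 1 := by
        rw [← hs]
        have := DFunLike.congr_fun h2 s
        simpa using this
      rw [hχ] at h3
      simp at h3
    set e : {a : α // a ∈ A₀} ≃ α := Equiv.subtypeUnivEquiv hmem with he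
    set Φ : FreeGroup {a : α // a ∈ A₀} ≃* FreeGroup α := FreeGroup.freeGroupCongr e with hΦdef
    have hΦ : ⇑(FreeGroup.map (Subtype.val : {a : α // a ∈ A₀} → α)) = ⇑Φ := rfl
    -- The subgroup generated by the images of S₀ is everything.
    have hS₀img : ⇑Φ '' (S₀ : Set (FreeGroup {a : α // a ∈ A₀}))
        = Set.range (FreeGroup.of : α → FreeGroup α) := by
      rw [← hΦ, hS₀]
      simp
    have htop : closure (presMk (R₀ : Set (FreeGroup {a : α // a ∈ A₀})) ''
        (S₀ : Set (FreeGroup {a : α // a ∈ A₀}))) = ⊤ := by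
      have h1 : Subgroup.map Φ.toMonoidHom (closure (S₀ : Set (FreeGroup {a : α // a ∈ A₀})))
          = ⊤ := by
        rw [MonoidHom.map_closure]
        show closure (⇑Φ '' _) = ⊤
        rw [hS₀img, FreeGroup.closure_range_of]
      have h2 : closure (S₀ : Set (FreeGroup {a : α // a ∈ A₀})) = ⊤ := by
        have h3 := congrArg (Subgroup.comap Φ.toMonoidHom) h1
        rwa [Subgroup.comap_map_eq_self_of_injective (f := Φ.toMonoidHom) Φ.injective, Subgroup.comap_top] at h3
      rw [← MonoidHom.map_closure, h2]
      exact Subgroup.map_top_of_surjective _ (QuotientGroup.mk'_surjective _)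
    refine ⟨FreeGroup.map (Subtype.val) '' (R₀ : Set (FreeGroup {a : α // a ∈ A₀})), hR₀,
      (R₀.finite_toSet.image _), le_antisymm (Subgroup.normalClosure_mono hR₀) ?_⟩
    apply Subgroup.normalClosure_le_normal
    intro r hr
    set w : FreeGroup {a : α // a ∈ A₀} := Φ.symm r with hw
    have hw1 : presMk R (FreeGroup.map (Subtype.val) w) = 1 := by
      rw [show FreeGroup.map (Subtype.val) w = r by rw [hΦ] at *; simp [hw]]
      exact (QuotientGroup.eq_one_iff r).2 (Subgroup.subset_normalClosure hr)
    have hmw : presMk (R₀ : Set (FreeGroup {a : α // a ∈ A₀})) w ∈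
        (closure (presMk (R₀ : Set (FreeGroup {a : α // a ∈ A₀})) ''
          (S₀ : Set (FreeGroup {a : α // a ∈ A₀}))) : Set _) := by
      rw [htop]; trivial
    have hm1 : (1 : FreeGroup {a : α // a ∈ A₀} ⧸
        Subgroup.normalClosure (R₀ : Set (FreeGroup {a : α // a ∈ A₀}))) ∈
        (closure (presMk (R₀ : Set (FreeGroup {a : α // a ∈ A₀})) ''
          (S₀ : Set (FreeGroup {a : α // a ∈ A₀}))) : Set _) := one_mem _
    have heq : presMk (R₀ : Set (FreeGroup {a : α // a ∈ A₀})) w = 1 := by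
      apply hinj hmw hm1
      rw [hcomm w, hw1, map_one]
    have hwmem : w ∈ Subgroup.normalClosure (R₀ : Set (FreeGroup {a : α // a ∈ A₀})) :=
      (QuotientGroup.eq_one_iff w).1 heq
    have : Φ w ∈ Subgroup.map Φ.toMonoidHom
        (normalClosure (R₀ : Set (FreeGroup {a : α // a ∈ A₀}))) :=
      Subgroup.mem_map_of_mem _ hwmem
    rw [Subgroup.map_normalClosure _ Φ.toMonoidHom Φ.surjective] at this
    have hr' : Φ w = r := by rw [hw]; simp
    rw [hr'] at this
    exact this
  · rintro ⟨R₀, hsub, hfin, hclos⟩ S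
    have hmem : ∀ a : α, a ∈ (Finset.univ : Finset α) := fun a => Finset.mem_univ a
    set e : {a : α // a ∈ (Finset.univ : Finset α)} ≃ α := Equiv.subtypeUnivEquiv hmem with he
    set Φ : FreeGroup {a : α // a ∈ (Finset.univ : Finset α)} ≃* FreeGroup α :=
      FreeGroup.freeGroupCongr e with hΦdef
    have hΦ : ⇑(FreeGroup.map (Subtype.val : {a : α // a ∈ (Finset.univ : Finset α)} → α))
        = ⇑Φ := rfl
    set R₀f : Finset (FreeGroup {a : α // a ∈ (Finset.univ : Finset α)}) :=
      hfin.toFinset.image Φ.symm with hR₀f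
    set S₀ : Finset (FreeGroup {a : α // a ∈ (Finset.univ : Finset α)}) :=
      S.image Φ.symm with hS₀def
    have himgR : FreeGroup.map (Subtype.val) '' (R₀f : Set (FreeGroup {a : α // a ∈ (Finset.univ : Finset α)})) = R₀ := by
      rw [hΦ, hR₀f]
      rw [Finset.coe_image, Set.Finite.coe_toFinset, ← Set.image_comp]
      simp
    have himgS : FreeGroup.map (Subtype.val) '' (S₀ : Set (FreeGroup {a : α // a ∈ (Finset.univ : Finset α)})) = (S : Set (FreeGroup α)) := by
      rw [hΦ, hS₀def]
      rw [Finset.coe_image, ← Set.image_comp]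
      simp
    have hmapeq : (Subgroup.normalClosure (R₀f : Set (FreeGroup {a : α // a ∈ (Finset.univ : Finset α)}))).map Φ.toMonoidHom = Subgroup.normalClosure R := by
      rw [Subgroup.map_normalClosure _ Φ.toMonoidHom Φ.surjective]
      rw [show ⇑Φ.toMonoidHom '' (R₀f : Set (FreeGroup {a : α // a ∈ (Finset.univ : Finset α)})) = R₀ from by rw [← himgR, hΦ]; rfl, hclos]
    refine ⟨Finset.univ, R₀f, S₀, himgR ▸ hsub, himgS, 
      (QuotientGroup.congr _ _ Φ hmapeq).toMonoidHom, fun w => ?_, ?_⟩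
    · show (QuotientGroup.congr _ _ Φ hmapeq) (QuotientGroup.mk' _ w)
        = QuotientGroup.mk' _ (FreeGroup.map (Subtype.val) w)
      rfl
    · intro x _ y _ hxy
      exact (QuotientGroup.congr _ _ Φ hmapeq).injective hxy
end

section
/- In the group G with generators a_i, b_i, x_i (i ∈ I), c, y and defining relations R ∈ 𝓡 (words in the a_i), x_i c x_i^{-1} = c b_i, y b_i y^{-1} = b_i a_i, c^n = 1, x_i b_j = b_j x_i, a_i b_j = b_j a_i, a_i c = c a_i, y c = c y, every word W(𝓐) in the letters a_i^{±1} satisfies W(𝓐)^n = 1. -/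
/-!
For a word `W`, the relation `x c x⁻¹ = c b` holds for `x = W(𝓧)`, `b = W(𝓑)` and the relation
`y b y⁻¹ = b a` for `b = W(𝓑)`, `a = W(𝓐)`: both extend multiplicatively from the generators
because words in `𝓧` and in `𝓐` commute with words in `𝓑`. Hence `c W(𝓑)` is conjugate to `c`,
so `(c W(𝓑))ⁿ = 1`, and conjugating by `y`, which commutes with `c`, gives `(c W(𝓑) W(𝓐))ⁿ = 1`.
Since `W(𝓐)` commutes with `c W(𝓑)`, it follows that `W(𝓐)ⁿ = 1`.
-/

/-- Generators of the group `G`: letters `a_i, b_i, x_i` for `i ∈ I`, and `c`, `y`. -/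
inductive Gen (I : Type) where
  | a : I → Gen I
  | b : I → Gen I
  | x : I → Gen I
  | c : Gen I
  | y : Gen I

open FreeGroup

/-- The defining relators of `G`: the relators `R ∈ 𝓡` (words in the `a_i`), together with
`x_i c x_i⁻¹ = c b_i`, `y b_i y⁻¹ = b_i a_i`, `c^n = 1`, `x_i b_j = b_j x_i`,
`a_i b_j = b_j a_i`, `a_i c = c a_i` and `y c = c y`. -/
def gRels (I : Type) (R : Set (FreeGroup I)) (n : ℕ) : Set (FreeGroup (Gen I)) :=
  (FreeGroup.map Gen.a '' R) ∪
  {w | ∃ i : I, w = of (Gen.x i) * of Gen.c * (of (Gen.x i))⁻¹ *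
        (of Gen.c * of (Gen.b i))⁻¹} ∪
  {w | ∃ i : I, w = of Gen.y * of (Gen.b i) * (of Gen.y)⁻¹ *
        (of (Gen.b i) * of (Gen.a i))⁻¹} ∪
  {of (Gen.c (I := I)) ^ n} ∪
  {w | ∃ i j : I, w = of (Gen.x i) * of (Gen.b j) * (of (Gen.b j) * of (Gen.x i))⁻¹} ∪
  {w | ∃ i j : I, w = of (Gen.a i) * of (Gen.b j) * (of (Gen.b j) * of (Gen.a i))⁻¹} ∪
  {w | ∃ i : I, w = of (Gen.a i) * of Gen.c * (of Gen.c * of (Gen.a i))⁻¹} ∪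
  {of (Gen.y (I := I)) * of Gen.c * (of Gen.c * of Gen.y)⁻¹}

namespace FreeGroup

variable {α G : Type*} [Group G]

theorem commute_of_forall_commute_of {f : FreeGroup α →* G} {g : G}
    (h : ∀ a, Commute (f (of a)) g) (w : FreeGroup α) : Commute (f w) g := by
  induction w using FreeGroup.induction_on with
  | C1 => simp
  | of a => exact h a
  | inv_of a ha => simpa using ha.inv_left
  | mul u v hu hv => simpa using hu.mul_left hv

theorem commute_of_forall_commute_of_of {f g : FreeGroup α →* G}
    (h : ∀ a b, Commute (f (of a)) (g (of b))) (u v : FreeGroup α) : Commute (f u) (g v) :=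
  commute_of_forall_commute_of
    (fun a => (commute_of_forall_commute_of (fun b => (h a b).symm) v).symm) u

theorem conj_eq_mul_of_forall_of {f g : FreeGroup α →* G} {t : G}
    (hfg : ∀ u v, Commute (f u) (g v)) (h : ∀ a, t * f (of a) * t⁻¹ = f (of a) * g (of a))
    (w : FreeGroup α) : t * f w * t⁻¹ = f w * g w := by
  have : (MulAut.conj t).toMonoidHom.comp f =
      (f.noncommCoprod g hfg).comp ((MonoidHom.id _).prod (MonoidHom.id _)) :=
    ext_hom _ _ fun a => by simpa using h a
  simpa using DFunLike.congr_fun this w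

end FreeGroup

theorem pow_eq_one_of_conj {G : Type*} [Group G] {a b c x y : G} {n : ℕ}
    (hx : x * c * x⁻¹ = c * b) (hy : y * b * y⁻¹ = b * a) (hc : c ^ n = 1)
    (hab : Commute a b) (hac : Commute a c) (hyc : Commute y c) : a ^ n = 1 := by
  have hcb : (c * b) ^ n = 1 := by rw [← hx, conj_pow, hc, mul_one, mul_inv_cancel]
  have hy' : y * (c * b) * y⁻¹ = c * b * a := by
    have : y * (c * b) * y⁻¹ = c * (y * b * y⁻¹) := by rw [← mul_assoc, hyc.eq]; group
    rw [this, hy, mul_assoc]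
  have hcba : (c * b * a) ^ n = 1 := by rw [← hy', conj_pow, hcb, mul_one, mul_inv_cancel]
  rwa [((hac.mul_right hab).symm).mul_pow, hcb, one_mul] at hcba

theorem mul_mul_inv_eq_mul_iff_inv_mul_mul_eq_mul {G : Type*} [Group G] {x b c : G}
    (hxb : Commute x b) : x * c * x⁻¹ = c * b ↔ c⁻¹ * x * c = x * b := by
  rw [mul_inv_eq_iff_eq_mul, mul_assoc c⁻¹, inv_mul_eq_iff_eq_mul, mul_assoc c, hxb.eq]

namespace gRels

variable {I : Type} {R : Set (FreeGroup I)} {n : ℕ}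

/-- `letterHom I R n Gen.a W` is the image of `W(𝓐)` in `G`, and similarly for `𝓑`, `𝓧`. -/
def letterHom (I : Type) (R : Set (FreeGroup I)) (n : ℕ) (e : I → Gen I) :
    FreeGroup I →* PresentedGroup (gRels I R n) :=
  (PresentedGroup.mk _).comp (map e)

@[simp] theorem letterHom_of (e : I → Gen I) (i : I) :
    letterHom I R n e (of i) = PresentedGroup.of (e i) := by
  simp [letterHom, PresentedGroup.of]

theorem x_mul_c_mul_x_inv (i : I) :
    (PresentedGroup.of (Gen.x i) * PresentedGroup.of Gen.c * (PresentedGroup.of (Gen.x i))⁻¹ :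
      PresentedGroup (gRels I R n)) = PresentedGroup.of Gen.c * PresentedGroup.of (Gen.b i) :=
  PresentedGroup.mk_eq_mk_of_mul_inv_mem
    (.inl <| .inl <| .inl <| .inl <| .inl <| .inl <| .inr ⟨i, rfl⟩)

theorem y_mul_b_mul_y_inv (i : I) :
    (PresentedGroup.of Gen.y * PresentedGroup.of (Gen.b i) * (PresentedGroup.of Gen.y)⁻¹ :
      PresentedGroup (gRels I R n)) = PresentedGroup.of (Gen.b i) * PresentedGroup.of (Gen.a i) :=
  PresentedGroup.mk_eq_mk_of_mul_inv_mem (.inl <| .inl <| .inl <| .inl <| .inl <| .inr ⟨i, rfl⟩)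

theorem c_pow : (PresentedGroup.of Gen.c : PresentedGroup (gRels I R n)) ^ n = 1 :=
  PresentedGroup.one_of_mem (.inl <| .inl <| .inl <| .inl <| .inr rfl)

theorem commute_x_b (i j : I) :
    Commute (PresentedGroup.of (Gen.x i) : PresentedGroup (gRels I R n))
      (PresentedGroup.of (Gen.b j)) :=
  PresentedGroup.mk_eq_mk_of_mul_inv_mem (.inl <| .inl <| .inl <| .inr ⟨i, j, rfl⟩)

theorem commute_a_b (i j : I) :
    Commute (PresentedGroup.of (Gen.a i) : PresentedGroup (gRels I R n))
      (PresentedGroup.of (Gen.b j)) :=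
  PresentedGroup.mk_eq_mk_of_mul_inv_mem (.inl <| .inl <| .inr ⟨i, j, rfl⟩)

theorem commute_a_c (i : I) :
    Commute (PresentedGroup.of (Gen.a i) : PresentedGroup (gRels I R n))
      (PresentedGroup.of Gen.c) :=
  PresentedGroup.mk_eq_mk_of_mul_inv_mem (.inl <| .inr ⟨i, rfl⟩)

theorem commute_y_c :
    Commute (PresentedGroup.of Gen.y : PresentedGroup (gRels I R n)) (PresentedGroup.of Gen.c) :=
  PresentedGroup.mk_eq_mk_of_mul_inv_mem (.inr rfl)

theorem commute_letterHom_a_b (u v : FreeGroup I) :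
    Commute (letterHom I R n Gen.a u) (letterHom I R n Gen.b v) :=
  FreeGroup.commute_of_forall_commute_of_of (by simpa using commute_a_b) u v

theorem commute_letterHom_x_b (u v : FreeGroup I) :
    Commute (letterHom I R n Gen.x u) (letterHom I R n Gen.b v) :=
  FreeGroup.commute_of_forall_commute_of_of (by simpa using commute_x_b) u v

theorem commute_letterHom_a_c (w : FreeGroup I) :
    Commute (letterHom I R n Gen.a w) (PresentedGroup.of Gen.c) :=
  FreeGroup.commute_of_forall_commute_of (by simpa using commute_a_c) w

theorem letterHom_x_mul_c_mul_inv (w : FreeGroup I) :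
    letterHom I R n Gen.x w * PresentedGroup.of Gen.c * (letterHom I R n Gen.x w)⁻¹ =
      PresentedGroup.of Gen.c * letterHom I R n Gen.b w := by
  rw [mul_mul_inv_eq_mul_iff_inv_mul_mul_eq_mul (commute_letterHom_x_b w w),
    ← inv_inv (PresentedGroup.of Gen.c)]
  refine FreeGroup.conj_eq_mul_of_forall_of commute_letterHom_x_b (fun i => ?_) w
  simpa only [inv_inv, letterHom_of] using
    (mul_mul_inv_eq_mul_iff_inv_mul_mul_eq_mul (commute_x_b i i)).1 (x_mul_c_mul_x_inv i)

theorem y_mul_letterHom_b_mul_inv (w : FreeGroup I) :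
    PresentedGroup.of Gen.y * letterHom I R n Gen.b w * (PresentedGroup.of Gen.y)⁻¹ =
      letterHom I R n Gen.b w * letterHom I R n Gen.a w :=
  FreeGroup.conj_eq_mul_of_forall_of (fun u v => (commute_letterHom_a_b v u).symm)
    (by simpa using y_mul_b_mul_y_inv) w

end gRels

open gRels in
/-- In the group `G` presented by the relations above, every word `W(𝓐)` in the letters
`a_i^{±1}` satisfies `W(𝓐)^n = 1`. -/
theorem pow_word_eq_one (I : Type) (R : Set (FreeGroup I)) (n : ℕ)
    (W : FreeGroup I) :
    (QuotientGroup.mk' (Subgroup.normalClosure (gRels I R n))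
        (FreeGroup.map Gen.a W)) ^ n = 1 :=
  pow_eq_one_of_conj (letterHom_x_mul_c_mul_inv W) (y_mul_letterHom_b_mul_inv W) c_pow
    (commute_letterHom_a_b W W) (commute_letterHom_a_c W) commute_y_c
end
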